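/- arXiv:2503.10541 — 9 statements merged into one kernel-verified Lean document; each statement's English description precedes it below -/
import Mathlib

section
/- Every tournament on at least 4l + 4 vertices contains at least l + 1 transitive arcs. -/
/-- An arc `(x, y)` is a *transitive arc* if there is a directed path from `x` to `y`
avoiding the arc `(x, y)` itself. -/
def IsTransArc {V : Type*} (A : V → V → Prop) (x y : V) : Prop :=
  A x y ∧ ∃ l : List V, l.Nodup ∧
    l.Chain' (fun a b => A a b ∧ ¬(a = x ∧ b = y)) ∧
    l.head? = some x ∧ l.getLast? = some y

/-- A tournament: a loopless digraph with exactly one arc between any two distinct vertices. -/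
def IsTournament {V : Type*} (A : V → V → Prop) : Prop :=
  (∀ v, ¬ A v v) ∧ ∀ u v : V, u ≠ v → (A u v ↔ ¬ A v u)

/-!
Any four vertices of a tournament span a transitive triangle `x → y → z`, `x → z`, and then
`(x, z)` is a transitive arc: pick a vertex `a`; two of the other three are both out-neighbours
or both in-neighbours of `a`, and the arc between those two closes the triangle. Hence at most
three vertices are not the tail of a transitive arc, so a tournament on `n ≥ 4` vertices has at
least `n - 3 ≥ ℓ + 1` transitive arcs.
-/

open Finset

section

variable {V : Type*} {A : V → V → Prop}

theorem IsTournament.adj_or_adj (hT : IsTournament A) {u v : V} (h : u ≠ v) :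
    A u v ∨ A v u := by
  by_cases huv : A u v
  · exact .inl huv
  · exact .inr ((hT.2 v u h.symm).2 huv)

theorem IsTransArc.of_triangle (hA : ∀ v, ¬ A v v) {x y z : V}
    (hxy : A x y) (hyz : A y z) (hxz : A x z) : IsTransArc A x z := by
  have ne {u v : V} (h : A u v) : u ≠ v := fun e => hA u (e ▸ h)
  refine ⟨hxz, [x, y, z], by simp [ne hxy, ne hyz, ne hxz], ?_, rfl, rfl⟩
  exact .cons_cons ⟨hxy, fun h => ne hyz h.2⟩
    (.cons_cons ⟨hyz, fun h => ne hxy h.1.symm⟩ (.singleton z))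

theorem IsTournament.isTransArc_or_isTransArc_of_out (hT : IsTournament A) {a u w : V}
    (hu : A a u) (hw : A a w) (huw : u ≠ w) : IsTransArc A a u ∨ IsTransArc A a w := by
  rcases hT.adj_or_adj huw with h | h
  · exact .inr (.of_triangle hT.1 hu h hw)
  · exact .inl (.of_triangle hT.1 hw h hu)

theorem IsTournament.isTransArc_or_isTransArc_of_in (hT : IsTournament A) {a u w : V}
    (hu : A u a) (hw : A w a) (huw : u ≠ w) : IsTransArc A u a ∨ IsTransArc A w a := by
  rcases hT.adj_or_adj huw with h | h
  · exact .inl (.of_triangle hT.1 h hw hu)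
  · exact .inr (.of_triangle hT.1 h hu hw)

theorem IsTournament.exists_isTransArc_of_four_le_card (hT : IsTournament A)
    (s : Finset V) (hs : 4 ≤ #s) : ∃ x ∈ s, ∃ z ∈ s, IsTransArc A x z := by
  classical
  obtain ⟨a, ha⟩ : s.Nonempty := card_pos.1 (by omega)
  have hsplit : 1 < #((s.erase a).filter (A a ·)) ∨ 1 < #((s.erase a).filter (¬ A a ·)) := by
    have := card_filter_add_card_filter_not (s := s.erase a) (A a ·)
    have := card_erase_of_mem ha
    omega
  rcases hsplit with hout | hin
  · obtain ⟨u, hu, w, hw, huw⟩ := one_lt_card.1 hout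
    simp only [mem_filter, mem_erase] at hu hw
    rcases hT.isTransArc_or_isTransArc_of_out hu.2 hw.2 huw with h | h
    exacts [⟨a, ha, u, hu.1.2, h⟩, ⟨a, ha, w, hw.1.2, h⟩]
  · obtain ⟨u, hu, w, hw, huw⟩ := one_lt_card.1 hin
    simp only [mem_filter, mem_erase] at hu hw
    have hua : A u a := (hT.2 u a hu.1.1).2 hu.2
    have hwa : A w a := (hT.2 w a hw.1.1).2 hw.2
    rcases hT.isTransArc_or_isTransArc_of_in hua hwa huw with h | h
    exacts [⟨u, hu.1.2, a, ha, h⟩, ⟨w, hw.1.2, a, ha, h⟩]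

theorem IsTournament.card_le_ncard_transArcs_add_three [Fintype V] (hT : IsTournament A) :
    Fintype.card V ≤ {p : V × V | IsTransArc A p.1 p.2}.ncard + 3 := by
  classical
  set tails := Prod.fst '' {p : V × V | IsTransArc A p.1 p.2}
  have htails : tailsᶜ.ncard ≤ 3 := by
    by_contra! h
    obtain ⟨x, hx, z, -, hxz⟩ :=
      hT.exists_isTransArc_of_four_le_card tailsᶜ.toFinset
        (by rwa [← Set.ncard_eq_toFinset_card'])
    exact Set.mem_toFinset.1 hx ⟨(x, z), hxz, rfl⟩
  calc Fintype.card V = tails.ncard + tailsᶜ.ncard := by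
        rw [Set.ncard_add_ncard_compl, Nat.card_eq_fintype_card]
    _ ≤ _ := add_le_add (Set.ncard_image_le (Set.toFinite _)) htails

end

/-- Every tournament on at least 4ℓ + 4 vertices contains at least ℓ + 1 transitive arcs. -/
theorem tournament_many_transitive_arcs
    {V : Type*} [Fintype V] (A : V → V → Prop) (hT : IsTournament A)
    (l : ℕ) (h : 4 * l + 4 ≤ Fintype.card V) :
    l + 1 ≤ {p : V × V | IsTransArc A p.1 p.2}.ncard := by
  have := hT.card_le_ncard_transArcs_add_three
  omega
end

section
/- Let D be a transitive-free digraph and P a directed path in D. Then any vertex of D not on P has at most 2 neighbors (counting both in-neighbors and out-neighbors) among the vertices of P. -/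
/-- A digraph is transitive-free if it has no transitive arc. -/
def TransitiveFree {V : Type*} (A : V → V → Prop) : Prop :=
  ∀ x y : V, ¬ IsTransArc A x y

namespace List

variable {α : Type*}

theorem exists_prefix_head?_getLast? {a b : α} {L : List α} (hb : b ∈ a :: L) :
    ∃ l, l <+: a :: L ∧ l.head? = some a ∧ l.getLast? = some b := by
  obtain ⟨s, t, hst⟩ := mem_iff_append.1 hb
  refine ⟨s ++ [b], ⟨t, by simp [hst]⟩, ?_, by simp⟩
  have : (a :: L).head? = some a := rfl
  rw [hst, head?_append] at this
  rwa [head?_append]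

theorem exists_infix_head?_getLast? {a b : α} :
    ∀ {L : List α}, a ∈ L → b ∈ L → ∃ l, l <:+: L ∧
      ((l.head? = some a ∧ l.getLast? = some b) ∨ (l.head? = some b ∧ l.getLast? = some a))
  | c :: L, ha, hb => by
    by_cases hac : a = c
    · subst hac
      obtain ⟨l, hl, hl'⟩ := exists_prefix_head?_getLast? hb
      exact ⟨l, hl.isInfix, .inl hl'⟩
    by_cases hbc : b = c
    · subst hbc
      obtain ⟨l, hl, hl'⟩ := exists_prefix_head?_getLast? ha
      exact ⟨l, hl.isInfix, .inr hl'⟩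
    obtain ⟨l, hl, hl'⟩ :=
      exists_infix_head?_getLast? (mem_of_ne_of_mem hac ha) (mem_of_ne_of_mem hbc hb)
    exact ⟨l, infix_cons hl, hl'⟩

end List

section

variable {V : Type*} {A : V → V → Prop}

theorem IsTransArc.of_flip {x y : V} (h : IsTransArc (flip A) x y) : IsTransArc A y x := by
  obtain ⟨hxy, l, hnd, hc, hhd, hlast⟩ := h
  refine ⟨hxy, l.reverse, List.nodup_reverse.2 hnd, ?_, by rwa [List.head?_reverse],
    by rwa [List.getLast?_reverse]⟩
  rw [List.Chain', List.isChain_reverse]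
  exact hc.imp fun a b ⟨hab, hne⟩ => ⟨hab, fun ⟨hb, ha⟩ => hne ⟨ha, hb⟩⟩

theorem TransitiveFree.flip (h : TransitiveFree A) : TransitiveFree (_root_.flip A) :=
  fun x y hxy => h y x hxy.of_flip

theorem isTransArc_of_cons {x y a : V} {l : List V} (hxy : A x y) (hxa : A x a) (hay : a ≠ y)
    (hx : x ∉ l) (hnd : l.Nodup) (hc : l.IsChain A) (hhd : l.head? = some a)
    (hlast : l.getLast? = some y) : IsTransArc A x y := by
  refine ⟨hxy, x :: l, List.nodup_cons.2 ⟨hx, hnd⟩, List.isChain_cons.2 ⟨?_, ?_⟩, rfl, ?_⟩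
  · simp only [hhd, Option.mem_def, Option.some.injEq, forall_eq']
    exact ⟨hxa, fun h => hay h.2⟩
  · exact hc.imp_of_mem_imp fun b c hb _ hbc => ⟨hbc, fun h => hx (h.1 ▸ hb)⟩
  · rw [List.getLast?_cons, hlast]
    rfl

theorem TransitiveFree.subsingleton_outNeighbors (hTF : TransitiveFree A) {L : List V}
    (hnd : L.Nodup) (hc : L.IsChain A) {x : V} (hx : x ∉ L) :
    {u | u ∈ L ∧ A x u}.Subsingleton := by
  have along_subpath : ∀ a b l, l <:+: L → l.head? = some a → l.getLast? = some b →
      A x a → A x b → a = b := by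
    intro a b l hl ha hb hxa hxb
    by_contra hab
    exact hTF x b <| isTransArc_of_cons hxb hxa hab (fun h => hx (hl.subset h))
      (hnd.sublist hl.sublist) (hc.infix hl) ha hb
  rintro a ⟨haL, hxa⟩ b ⟨hbL, hxb⟩
  obtain ⟨l, hl, ⟨ha, hb⟩ | ⟨hb, ha⟩⟩ := List.exists_infix_head?_getLast? haL hbL
  · exact along_subpath a b l hl ha hb hxa hxb
  · exact (along_subpath b a l hl hb ha hxb hxa).symm

theorem TransitiveFree.subsingleton_inNeighbors (hTF : TransitiveFree A) {L : List V}
    (hnd : L.Nodup) (hc : L.IsChain A) {x : V} (hx : x ∉ L) :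
    {u | u ∈ L ∧ A u x}.Subsingleton := by
  simpa [_root_.flip] using hTF.flip.subsingleton_outNeighbors (List.nodup_reverse.2 hnd)
    (List.isChain_reverse.2 hc) (by simpa using hx)

end

/-- In a transitive-free digraph, any vertex not on a directed path `P` has at most
2 neighbors (in- or out-neighbors) among the vertices of `P`. -/
theorem transitiveFree_offPath_vertex_two_neighbors
    {V : Type*} (A : V → V → Prop) (hTF : TransitiveFree A)
    (t : ℕ) (v : Fin t → V) (hinj : Function.Injective v)
    (hpath : ∀ i : Fin t, ∀ h : (i : ℕ) + 1 < t, A (v i) (v ⟨(i : ℕ) + 1, h⟩))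
    (x : V) (hx : x ∉ Set.range v) :
    {u ∈ Set.range v | A x u ∨ A u x}.ncard ≤ 2 := by
  set L := List.ofFn v
  have hmem : ∀ u, u ∈ L ↔ u ∈ Set.range v := fun u => List.mem_ofFn
  have hnd : L.Nodup := List.nodup_ofFn.2 hinj
  have hc : L.IsChain A := List.isChain_ofFn.2 fun i hi => hpath ⟨i, by omega⟩ hi
  have hxL : x ∉ L := by rwa [hmem]
  have hout := hTF.subsingleton_outNeighbors hnd hc hxL
  have hin := hTF.subsingleton_inNeighbors hnd hc hxL
  have hsub : {u ∈ Set.range v | A x u ∨ A u x} ⊆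
      {u | u ∈ L ∧ A x u} ∪ {u | u ∈ L ∧ A u x} := by
    rintro u ⟨hu, h | h⟩
    exacts [.inl ⟨(hmem u).2 hu, h⟩, .inr ⟨(hmem u).2 hu, h⟩]
  calc {u ∈ Set.range v | A x u ∨ A u x}.ncard
      ≤ ({u | u ∈ L ∧ A x u} ∪ {u | u ∈ L ∧ A u x}).ncard :=
        Set.ncard_le_ncard hsub (hout.finite.union hin.finite)
    _ ≤ {u | u ∈ L ∧ A x u}.ncard + {u | u ∈ L ∧ A u x}.ncard := Set.ncard_union_le _ _
    _ ≤ 1 + 1 := add_le_add ((Set.ncard_le_one hout.finite).2 hout)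
        ((Set.ncard_le_one hin.finite).2 hin)
end

section
/- Let D be an α-bounded digraph (the underlying undirected graph has no independent set of size α+1). If D has more than α(2α+3) vertices, then D contains a transitive arc, i.e., D is not transitive-free. -/
/-- A digraph is `α`-bounded if every independent set of its underlying undirected
graph has at most `α` vertices. -/
def AlphaBounded {V : Type*} (A : V → V → Prop) (α : ℕ) : Prop :=
  ∀ S : Set V, (∀ u ∈ S, ∀ w ∈ S, u ≠ w → ¬ A u w ∧ ¬ A w u) → S.ncard ≤ α

/-!
In a transitive-free digraph the out-neighbourhood and the in-neighbourhood of every vertex are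
independent, since an arc inside either one closes a triangle whose long side is a transitive arc.
Hence the underlying graph has maximum degree at most `2α`. A maximum independent set has at most
`α` vertices and dominates the graph, so `|V| ≤ α (2α + 1)`.
-/

open scoped Finset

open SimpleGraph

namespace SimpleGraph

variable {V : Type*} {G : SimpleGraph V}

theorem exists_adj_of_maximal_isIndepSet {s : Set V} (hs : Maximal G.IsIndepSet s) {v : V}
    (hv : v ∉ s) : ∃ u ∈ s, G.Adj u v := by
  by_contra! h
  have hins : G.IsIndepSet (insert v s) :=
    hs.1.insert fun u hu _ => ⟨fun hvu => h u hu hvu.symm, h u hu⟩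
  exact hv (hs.2 hins (Set.subset_insert v s) (Set.mem_insert v s))

theorem card_le_indepNum_mul_maxDegree_succ [Fintype V] [DecidableRel G.Adj] :
    Fintype.card V ≤ G.indepNum * (G.maxDegree + 1) := by
  classical
  obtain ⟨S, hS⟩ := G.maximumIndepSet_exists
  have hcover : (Finset.univ : Finset V) ⊆ S.biUnion fun s => insert s (G.neighborFinset s) := by
    intro v _
    by_cases hv : v ∈ S
    · exact Finset.mem_biUnion.mpr ⟨v, hv, Finset.mem_insert_self v _⟩
    · obtain ⟨u, hu, huv⟩ :=
        exists_adj_of_maximal_isIndepSet (hS.isMaximalIndepSet S) (Finset.mem_coe.not.mpr hv)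
      exact Finset.mem_biUnion.mpr
        ⟨u, hu, Finset.mem_insert_of_mem ((G.mem_neighborFinset u v).mpr huv)⟩
  calc Fintype.card V
      ≤ #(S.biUnion fun s => insert s (G.neighborFinset s)) := Finset.card_le_card hcover
    _ ≤ ∑ s ∈ S, #(insert s (G.neighborFinset s)) := Finset.card_biUnion_le
    _ ≤ #S * (G.maxDegree + 1) := Finset.sum_le_card_nsmul _ _ _ fun s _ =>
        (Finset.card_insert_le _ _).trans (Nat.succ_le_succ (G.degree_le_maxDegree s))
    _ = G.indepNum * (G.maxDegree + 1) := by rw [G.maximumIndepSet_card_eq_indepNum S hS]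

end SimpleGraph

section Digraph

variable {V : Type*} {A : V → V → Prop}

def IsTransFree (A : V → V → Prop) : Prop :=
  ∀ x y, ¬ IsTransArc A x y

theorem isTransArc_self {x : V} (hx : A x x) : IsTransArc A x x :=
  ⟨hx, [x], List.nodup_singleton x, List.isChain_singleton x, rfl, rfl⟩

theorem isTransArc_of_adj_of_adj {x u w : V} (hxu : A x u) (huw : A u w) (hxw : A x w)
    (hx_ne_u : x ≠ u) (hu_ne_w : u ≠ w) (hx_ne_w : x ≠ w) : IsTransArc A x w := by
  refine ⟨hxw, [x, u, w], by simp [hx_ne_u, hx_ne_w, hu_ne_w], ?_, rfl, rfl⟩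
  exact List.isChain_cons_cons.mpr ⟨⟨hxu, fun h => hu_ne_w h.2⟩,
    List.isChain_pair.mpr ⟨huw, fun h => hx_ne_u h.1.symm⟩⟩

namespace IsTransFree

theorem irrefl (hA : IsTransFree A) (x : V) : ¬ A x x :=
  fun hx => hA x x (isTransArc_self hx)

theorem ne_of_adj (hA : IsTransFree A) {x y : V} (hxy : A x y) : x ≠ y := by
  rintro rfl
  exact hA.irrefl x hxy

theorem not_adj_of_adj_of_adj (hA : IsTransFree A) {x u w : V} (hxu : A x u) (huw : A u w) :
    ¬ A x w := fun hxw =>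
  hA x w <| isTransArc_of_adj_of_adj hxu huw hxw (hA.ne_of_adj hxu) (hA.ne_of_adj huw)
    (hA.ne_of_adj hxw)

theorem isIndepSet_outNeighbors (hA : IsTransFree A) (x : V) :
    (fromRel A).IsIndepSet {u | A x u} := by
  intro u hu w hw _ huw
  rcases ((fromRel_adj A u w).mp huw).2 with h | h
  · exact hA.not_adj_of_adj_of_adj hu h hw
  · exact hA.not_adj_of_adj_of_adj hw h hu

theorem isIndepSet_inNeighbors (hA : IsTransFree A) (x : V) :
    (fromRel A).IsIndepSet {u | A u x} := by
  intro u hu w hw _ huw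
  rcases ((fromRel_adj A u w).mp huw).2 with h | h
  · exact hA.not_adj_of_adj_of_adj h hw hu
  · exact hA.not_adj_of_adj_of_adj h hu hw

end IsTransFree

namespace AlphaBounded

variable {α : ℕ}

theorem ncard_le_of_isIndepSet (hα : AlphaBounded A α) {s : Set V}
    (hs : (fromRel A).IsIndepSet s) : s.ncard ≤ α :=
  hα s fun u hu w hw huw => by simpa [fromRel_adj, huw, not_or] using hs hu hw huw

theorem indepNum_le [Finite V] (hα : AlphaBounded A α) : (fromRel A).indepNum ≤ α := by
  obtain ⟨s, hs⟩ := (fromRel A).exists_isNIndepSet_indepNum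
  rw [← hs.card_eq, ← Set.ncard_coe_finset]
  exact hα.ncard_le_of_isIndepSet hs.isIndepSet

theorem degree_fromRel_le [Fintype V] [DecidableRel (fromRel A).Adj] (hα : AlphaBounded A α)
    (hA : IsTransFree A) (x : V) : (fromRel A).degree x ≤ 2 * α := by
  have hsub : (fromRel A).neighborSet x ⊆ {u | A x u} ∪ {u | A u x} := fun u hu =>
    ((fromRel_adj A x u).mp hu).2
  calc (fromRel A).degree x = ((fromRel A).neighborSet x).ncard := by
        rw [← card_neighborFinset_eq_degree, ← Set.ncard_coe_finset, coe_neighborFinset]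
    _ ≤ ({u | A x u} ∪ {u | A u x}).ncard := Set.ncard_le_ncard hsub
    _ ≤ {u | A x u}.ncard + {u | A u x}.ncard := Set.ncard_union_le _ _
    _ ≤ 2 * α := by
        have := hα.ncard_le_of_isIndepSet (hA.isIndepSet_outNeighbors x)
        have := hα.ncard_le_of_isIndepSet (hA.isIndepSet_inNeighbors x)
        omega

end AlphaBounded

end Digraph

/-- Every `α`-bounded digraph on more than `α(2α+3)` vertices contains a transitive arc. -/
theorem alphaBounded_large_has_transitive_arc
    {V : Type*} [Fintype V] (A : V → V → Prop) (α : ℕ)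
    (hα : AlphaBounded A α) (hcard : α * (2 * α + 3) < Fintype.card V) :
    ∃ x y : V, IsTransArc A x y := by
  classical
  by_contra! hA
  have hΔ : (fromRel A).maxDegree ≤ 2 * α :=
    maxDegree_le_of_forall_degree_le _ _ (hα.degree_fromRel_le hA)
  have hcard_le : Fintype.card V ≤ α * (2 * α + 3) :=
    calc Fintype.card V ≤ (fromRel A).indepNum * ((fromRel A).maxDegree + 1) :=
          card_le_indepNum_mul_maxDegree_succ
      _ ≤ α * (2 * α + 3) := Nat.mul_le_mul hα.indepNum_le (by omega)
  omega
end

section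
/- Every connected local tournament contains a Hamiltonian directed path. -/
/-- A local tournament: a loopless digraph in which, for every vertex `v`, both the
out-neighborhood and the in-neighborhood of `v` induce tournaments. -/
def IsLocalTournament {V : Type*} (A : V → V → Prop) : Prop :=
  (∀ v, ¬ A v v) ∧
  (∀ v x y : V, A v x → A v y → x ≠ y → (A x y ↔ ¬ A y x)) ∧
  (∀ v x y : V, A x v → A y v → x ≠ y → (A x y ↔ ¬ A y x))

/-- The underlying undirected graph is connected. -/
def UConnected {V : Type*} (A : V → V → Prop) : Prop :=
  ∀ u v : V, Relation.ReflTransGen (fun a b => A a b ∨ A b a) u v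

/-!
A Hamiltonian path is grown one vertex at a time. If `w` lies off a directed path `P` and
`x → w` for some `x` on `P`, walk along `P` from `x`: while the current vertex `a` satisfies
`a → w`, its successor `b` on `P` is another out-neighbour of `a`, so `b → w` or `w → b`; in
the second case `w` fits between `a` and `b`, and if the walk reaches the end of `P`, `w` is
appended. This insertion needs only that out-neighbourhoods are semicomplete, so the case
`w → x` follows by reversing all arcs, which turns a local tournament into a local tournament. Connectivity
supplies an arc between the path and any vertex it misses.
-/

open List

theorem Relation.ReflTransGen.exists_rel_of_mem_of_notMem {α : Type*} {r : α → α → Prop}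
    {s : Set α} {a b : α} (h : ReflTransGen r a b) (ha : a ∈ s) (hb : b ∉ s) :
    ∃ x ∈ s, ∃ y ∉ s, r x y := by
  induction h with
  | refl => exact absurd ha hb
  | @tail c d _ hcd ih =>
    by_cases hc : c ∈ s
    · exact ⟨c, hc, d, hb, hcd⟩
    · exact ih hc

def IsLocallyOutSemicomplete {V : Type*} (A : V → V → Prop) : Prop :=
  ∀ v x y, A v x → A v y → x ≠ y → A x y ∨ A y x

namespace IsLocallyOutSemicomplete

variable {V : Type*} {A : V → V → Prop}

theorem exists_isChain_perm_of_rel_head (hA : IsLocallyOutSemicomplete A) {w : V} :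
    ∀ {a : V} {l : List V}, (a :: l).IsChain A → w ∉ a :: l → A a w →
      ∃ l', (a :: l').IsChain A ∧ l' ~ w :: l
  | _, [], _, _, haw => ⟨[w], isChain_pair.2 haw, Perm.refl _⟩
  | a, b :: l, hc, hw, haw => by
    obtain ⟨hab, hc⟩ := isChain_cons_cons.1 hc
    rcases hA a b w hab haw (by rintro rfl; simp at hw) with hbw | hwb
    · obtain ⟨l', hc', hp⟩ := hA.exists_isChain_perm_of_rel_head hc (by simp_all) hbw
      exact ⟨b :: l', isChain_cons_cons.2 ⟨hab, hc'⟩, (hp.cons b).trans (Perm.swap w b l)⟩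
    · exact ⟨w :: b :: l, isChain_cons_cons.2 ⟨haw, isChain_cons_cons.2 ⟨hwb, hc⟩⟩, Perm.refl _⟩

theorem exists_isChain_perm_of_rel_of_mem (hA : IsLocallyOutSemicomplete A) {l : List V}
    (hc : l.IsChain A) {w : V} (hw : w ∉ l) {x : V} (hx : x ∈ l) (hxw : A x w) :
    ∃ l', l'.IsChain A ∧ l' ~ w :: l := by
  obtain ⟨l₁, l₂, rfl⟩ := append_of_mem hx
  obtain ⟨hc₁, hc₂, hjoin⟩ := isChain_append.1 hc
  obtain ⟨l₂', hc₂', hp⟩ :=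
    hA.exists_isChain_perm_of_rel_head hc₂ (fun h => hw (mem_append_right _ h)) hxw
  refine ⟨l₁ ++ x :: l₂', isChain_append.2 ⟨hc₁, hc₂', by simpa using hjoin⟩, ?_⟩
  calc l₁ ++ x :: l₂' ~ l₁ ++ x :: w :: l₂ := (hp.cons x).append_left l₁
    _ ~ l₁ ++ w :: x :: l₂ := (Perm.swap w x l₂).append_left l₁
    _ ~ w :: (l₁ ++ x :: l₂) := perm_middle

end IsLocallyOutSemicomplete

namespace IsLocalTournament

variable {V : Type*} {A : V → V → Prop}

theorem flip (hA : IsLocalTournament A) : IsLocalTournament (flip A) := by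
  obtain ⟨hirr, hout, hin⟩ := hA
  refine ⟨hirr, fun v x y hx hy hxy => ?_, fun v x y hx hy hxy => ?_⟩
  · have := hin v x y hx hy hxy
    simp only [Function.flip_def]
    tauto
  · have := hout v x y hx hy hxy
    simp only [Function.flip_def]
    tauto

theorem isLocallyOutSemicomplete (hA : IsLocalTournament A) : IsLocallyOutSemicomplete A := by
  intro v x y hx hy hxy
  have := hA.2.1 v x y hx hy hxy
  tauto

theorem exists_isChain_perm_of_adj (hA : IsLocalTournament A) {l : List V} (hc : l.IsChain A)
    {w : V} (hw : w ∉ l) {x : V} (hx : x ∈ l) (hadj : A x w ∨ A w x) :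
    ∃ l', l'.IsChain A ∧ l' ~ w :: l := by
  rcases hadj with hxw | hwx
  · exact hA.isLocallyOutSemicomplete.exists_isChain_perm_of_rel_of_mem hc hw hx hxw
  · obtain ⟨l', hc', hp⟩ := hA.flip.isLocallyOutSemicomplete.exists_isChain_perm_of_rel_of_mem
      (isChain_reverse.2 hc) (by simpa using hw) (mem_reverse.2 hx) hwx
    exact ⟨l'.reverse, isChain_reverse.2 hc',
      (reverse_perm l').trans (hp.trans ((reverse_perm l).cons w))⟩

theorem exists_isChain_perm_of_notMem (hA : IsLocalTournament A) (hconn : UConnected A)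
    {l : List V} (hc : l.IsChain A) {u : V} (hu : u ∉ l) :
    ∃ w ∉ l, ∃ l', l'.IsChain A ∧ l' ~ w :: l := by
  cases l with
  | nil => exact ⟨u, hu, [u], isChain_singleton u, Perm.refl _⟩
  | cons v l =>
    obtain ⟨x, hx, w, hw, hadj⟩ :=
      (hconn v u).exists_rel_of_mem_of_notMem (s := {y | y ∈ v :: l}) mem_cons_self hu
    exact ⟨w, hw, hA.exists_isChain_perm_of_adj hc hw hx hadj⟩

theorem exists_nodup_isChain_forall_mem [Fintype V] (hA : IsLocalTournament A)
    (hconn : UConnected A) {l : List V} (hnd : l.Nodup) (hc : l.IsChain A) :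
    ∃ l' : List V, l'.Nodup ∧ l'.IsChain A ∧ ∀ v, v ∈ l' := by
  by_cases hall : ∀ v, v ∈ l
  · exact ⟨l, hnd, hc, hall⟩
  obtain ⟨u, hu⟩ := not_forall.1 hall
  obtain ⟨w, hw, l', hc', hp⟩ := hA.exists_isChain_perm_of_notMem hconn hc hu
  have hnd' : (w :: l).Nodup := nodup_cons.2 ⟨hw, hnd⟩
  have hlen : (w :: l).length ≤ Fintype.card V := hnd'.length_le_card
  exact hA.exists_nodup_isChain_forall_mem hconn (hp.nodup_iff.2 hnd') hc'
termination_by Fintype.card V - l.length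
decreasing_by rw [hp.length_eq]; simp only [length_cons] at hlen ⊢; omega

end IsLocalTournament

/-- Every connected local tournament contains a Hamiltonian directed path. -/
theorem connected_localTournament_hamiltonian_path
    {V : Type*} [Fintype V] (A : V → V → Prop)
    (hLT : IsLocalTournament A) (hconn : UConnected A) :
    ∃ f : Fin (Fintype.card V) ≃ V,
      ∀ i : Fin (Fintype.card V), ∀ h : (i : ℕ) + 1 < Fintype.card V,
        A (f i) (f ⟨(i : ℕ) + 1, h⟩) := by
  classical
  obtain ⟨l, hnd, hc, hall⟩ := hLT.exists_nodup_isChain_forall_mem hconn nodup_nil isChain_nil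
  let e := hnd.getEquivOfForallMemList l hall
  have hlen : Fintype.card V = l.length := by simpa using (Fintype.card_congr e).symm
  refine ⟨(finCongr hlen).trans e, fun i h => ?_⟩
  simpa [e] using isChain_iff_getElem.1 hc i (hlen ▸ h)
end

section
/- Let D be a connected acyclic local tournament with unique topological ordering (v_1, ..., v_n). For each vertex v_i, let l(v_i) be the last vertex u in the ordering with (v_i, u) an arc, and S_i = {v_i, v_{i+1}, ..., l(v_i)}. Then D[S_i] is an acyclic tournament and S_i = N+(v_i) ∪ {v_i}. -/
/-!
If some arc `σ k → σ (k+1)` were missing, swapping `k` and `k+1` would give a second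
topological ordering; so uniqueness forces all these arcs. Now let `σ i → σ m` be an arc and
`i < j < m`. By downward induction `σ i → σ (j+1)`, and `σ j → σ (j+1)`, so `σ i` and `σ j` are
in-neighbours of `σ (j+1)`, hence adjacent, and the ordering orients the arc `σ i → σ j`. Thus
`{σ i, …, σ m}` is the closed out-neighbourhood of `σ i`, which is a tournament because the
out-neighbourhood is one, and acyclic as a subdigraph of `D`.
-/

theorem Fin.swap_lt_swap_of_succ_eq {n : ℕ} {k k' p q : Fin n} (hk : k'.val = k.val + 1)
    (hpq : p < q) (hne : ¬ (p = k ∧ q = k')) :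
    Equiv.swap k k' p < Equiv.swap k k' q := by
  simp only [Equiv.swap_apply_def]
  split_ifs <;> simp only [Fin.ext_iff, Fin.lt_def] at * <;> omega

section TopologicalOrder

variable {V : Type*} {n : ℕ} {A : V → V → Prop} {σ : Fin n ≃ V}

def IsTopologicalOrder (A : V → V → Prop) (σ : Fin n ≃ V) : Prop :=
  ∀ i j, A (σ i) (σ j) → i < j

theorem IsTopologicalOrder.swap (hσ : IsTopologicalOrder A σ) {k k' : Fin n}
    (hk : k'.val = k.val + 1) (hA : ¬ A (σ k) (σ k')) :
    IsTopologicalOrder A ((Equiv.swap k k').trans σ) := by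
  intro a b hab
  have hne : ¬ (Equiv.swap k k' a = k ∧ Equiv.swap k k' b = k') := by
    rintro ⟨ha, hb⟩
    simp only [Equiv.trans_apply, ha, hb] at hab
    exact hA hab
  simpa using Fin.swap_lt_swap_of_succ_eq hk (hσ _ _ hab) hne

theorem IsTopologicalOrder.adj_of_unique (hσ : IsTopologicalOrder A σ)
    (huniq : ∀ τ : Fin n ≃ V, IsTopologicalOrder A τ → τ = σ) {k k' : Fin n}
    (hk : k'.val = k.val + 1) : A (σ k) (σ k') := by
  by_contra hA
  have h := congrArg (· k) (huniq _ (hσ.swap hk hA))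
  simp only [Equiv.trans_apply, Equiv.swap_apply_left, EmbeddingLike.apply_eq_iff_eq,
    Fin.ext_iff] at h
  omega

theorem IsLocalTournament.adj_of_lt_of_le (hLT : IsLocalTournament A)
    (hσ : IsTopologicalOrder A σ) (hsucc : ∀ j k : Fin n, k.val = j.val + 1 → A (σ j) (σ k))
    {i j m : Fin n} (him : A (σ i) (σ m)) (hij : i < j) (hjm : j ≤ m) : A (σ i) (σ j) := by
  obtain ⟨d, hd⟩ : ∃ d, m.val = j.val + d := ⟨m.val - j.val, by omega⟩
  induction d generalizing j with
  | zero => rwa [show j = m from Fin.ext (by omega)]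
  | succ d ih =>
    let j' : Fin n := ⟨j.val + 1, by omega⟩
    have hij' : A (σ i) (σ j') :=
      ih (hij.trans (Fin.lt_def.2 (Nat.lt_succ_self _))) (Fin.le_def.2 (by simp [j']; omega))
        (by simp [j']; omega)
    have hjj' : A (σ j) (σ j') := hsucc j j' rfl
    exact (hLT.2.2 _ _ _ hij' hjj' (σ.injective.ne hij.ne)).2 fun hji => lt_asymm hij (hσ _ _ hji)

theorem IsLocalTournament.image_Icc_eq_insert (hLT : IsLocalTournament A)
    (hσ : IsTopologicalOrder A σ) (hsucc : ∀ j k : Fin n, k.val = j.val + 1 → A (σ j) (σ k))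
    {i m : Fin n} (hm : m = i ∨ A (σ i) (σ m)) (hmax : ∀ j, A (σ i) (σ j) → j ≤ m) :
    σ '' Set.Icc i m = insert (σ i) {u | A (σ i) u} := by
  ext u
  constructor
  · rintro ⟨j, ⟨hij, hjm⟩, rfl⟩
    rcases hij.eq_or_lt with rfl | hij
    · exact Set.mem_insert _ _
    · rcases hm with rfl | him
      · exact absurd (hij.trans_le hjm) (lt_irrefl _)
      · exact Or.inr (hLT.adj_of_lt_of_le hσ hsucc him hij hjm)
  · rintro (rfl | hu)
    · refine ⟨i, ⟨le_rfl, ?_⟩, rfl⟩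
      rcases hm with rfl | him
      exacts [le_rfl, (hσ _ _ him).le]
    · exact ⟨σ.symm u, ⟨(hσ i _ (by simpa using hu)).le, hmax _ (by simpa using hu)⟩, by simp⟩

end TopologicalOrder

theorem IsLocalTournament.tournament_insert_outNeighbors {V : Type*} {A : V → V → Prop}
    (hLT : IsLocalTournament A) (hasym : ∀ u w, A u w → ¬ A w u) (v : V) :
    ∀ u ∈ insert v {u | A v u}, ∀ w ∈ insert v {u | A v u}, u ≠ w → (A u w ↔ ¬ A w u) := by
  rintro u (rfl | hu) w (rfl | hw) hne
  · exact absurd rfl hne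
  · exact ⟨fun _ => hasym _ _ hw, fun _ => hw⟩
  · exact iff_of_false (hasym _ _ hu) (not_not_intro hu)
  · exact hLT.2.1 _ u w hu hw hne

theorem interval_induces_acyclic_tournament_general
    {V : Type*} [Fintype V] (A : V → V → Prop) [DecidableRel A]
    (hLT : IsLocalTournament A)
    (hac : Irreflexive (Relation.TransGen A))
    (σ : Fin (Fintype.card V) ≃ V)
    (htopo : ∀ i j : Fin (Fintype.card V), A (σ i) (σ j) → i < j)
    (huniq : ∀ τ : Fin (Fintype.card V) ≃ V,
      (∀ i j : Fin (Fintype.card V), A (τ i) (τ j) → i < j) → τ = σ)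
    (i : Fin (Fintype.card V))
    (m : Fin (Fintype.card V))
    (hm : m = (insert i (Finset.univ.filter fun j => A (σ i) (σ j))).max'
      (Finset.insert_nonempty _ _))
    (S : Set V) (hS : S = σ '' {j | i ≤ j ∧ j ≤ m}) :
    (S = insert (σ i) {u | A (σ i) u}) ∧
    (∀ u ∈ S, ∀ w ∈ S, u ≠ w → (A u w ↔ ¬ A w u)) ∧
    Irreflexive (Relation.TransGen fun a b => a ∈ S ∧ b ∈ S ∧ A a b) := by
  have hasym : ∀ u w, A u w → ¬ A w u := fun u w huw hwu => hac u (.tail (.single huw) hwu)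
  have hsucc : ∀ j k : Fin (Fintype.card V), k.val = j.val + 1 → A (σ j) (σ k) :=
    fun _ _ => IsTopologicalOrder.adj_of_unique htopo huniq
  have hm_mem : m = i ∨ A (σ i) (σ m) := by
    simpa [← hm] using Finset.max'_mem _ (Finset.insert_nonempty i
      (Finset.univ.filter fun j => A (σ i) (σ j)))
  have hm_max : ∀ j, A (σ i) (σ j) → j ≤ m := fun j h => hm ▸ Finset.le_max' _ _ (by simp [h])
  have hSeq : S = insert (σ i) {u | A (σ i) u} :=
    hS.trans (hLT.image_Icc_eq_insert htopo hsucc hm_mem hm_max)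
  exact ⟨hSeq, hSeq ▸ hLT.tournament_insert_outNeighbors hasym (σ i),
    fun a ha => hac a (Relation.TransGen.mono (fun _ _ h => h.2.2) a a ha)⟩

/-- Let `D` be a connected acyclic local tournament with unique topological ordering `σ`.
For each `i`, let `m i` be the position of the last vertex `u` in the ordering with an arc
from `σ i` to `u` (or `i` itself if none), and `S i = {σ i, σ (i+1), ..., σ (m i)}`. Then
`D[S i]` is an acyclic tournament and `S i = N⁺(σ i) ∪ {σ i}`. -/
theorem interval_induces_acyclic_tournament
    {V : Type*} [Fintype V] (A : V → V → Prop) [DecidableRel A]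
    (hLT : IsLocalTournament A) (hconn : UConnected A)
    (hac : Irreflexive (Relation.TransGen A))
    (σ : Fin (Fintype.card V) ≃ V)
    (htopo : ∀ i j : Fin (Fintype.card V), A (σ i) (σ j) → i < j)
    (huniq : ∀ τ : Fin (Fintype.card V) ≃ V,
      (∀ i j : Fin (Fintype.card V), A (τ i) (τ j) → i < j) → τ = σ)
    (i : Fin (Fintype.card V))
    (m : Fin (Fintype.card V))
    (hm : m = (insert i (Finset.univ.filter fun j => A (σ i) (σ j))).max'
      (Finset.insert_nonempty _ _))
    (S : Set V) (hS : S = σ '' {j | i ≤ j ∧ j ≤ m}) :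
    (S = insert (σ i) {u | A (σ i) u}) ∧
    (∀ u ∈ S, ∀ w ∈ S, u ≠ w → (A u w ↔ ¬ A w u)) ∧
    Irreflexive (Relation.TransGen fun a b => a ∈ S ∧ b ∈ S ∧ A a b) :=
  interval_induces_acyclic_tournament_general A hLT hac σ htopo huniq i m hm S hS
end

section
/- A local tournament D is transitive-free if and only if D is singly connected. -/
/-- A directed path: a nonempty list of distinct vertices consecutively joined by arcs. -/
def IsDipath {V : Type*} (A : V → V → Prop) (l : List V) : Prop :=
  l ≠ [] ∧ l.Nodup ∧ l.Chain' A

/-- A digraph is singly connected if for every ordered pair of vertices there is at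
most one directed path from the first to the second. -/
def SinglyConnected {V : Type*} (A : V → V → Prop) : Prop :=
  ∀ u v : V, ∀ p q : List V, IsDipath A p → IsDipath A q →
    p.head? = some u → p.getLast? = some v →
    q.head? = some u → q.getLast? = some v → p = q

/-! Transitive-freeness forces every out-neighbourhood of a local tournament to have at most
one vertex: two out-neighbours `x, y` of `v` are joined by an arc, say `x → y`, and then
`v → y` is transitive via `v → x → y`. In a digraph of out-degree at most one, of two directed
paths with the same start one is a prefix of the other; as a path does not revisit its last
vertex, paths with the same ends coincide. Conversely, in a singly connected digraph the arc `x → y`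
is the only path from `x` to `y`, so it cannot be transitive. -/

section

variable {V : Type*} {A : V → V → Prop}

theorem List.getLast?_cons_cons_ne_of_nodup {α : Type*} {a b : α} {l : List α}
    (h : (a :: b :: l).Nodup) : (a :: b :: l).getLast? ≠ some a := by
  rw [List.getLast?_cons_cons]
  exact fun hlast => (List.nodup_cons.mp h).1 (List.mem_of_getLast? hlast)

theorem eq_of_isChain_of_outUnique (hA : ∀ v x y, A v x → A v y → x = y) :
    ∀ {p q : List V}, p.Nodup → p.IsChain A → q.Nodup → q.IsChain A →
      p.head? = q.head? → p.getLast? = q.getLast? → p = q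
  | [], [], _, _, _, _, _, _ => rfl
  | [], _ :: _, _, _, _, _, hhead, _ | _ :: _, [], _, _, _, _, hhead, _ => by simp at hhead
  | [a], [b], _, _, _, _, hhead, _ => by simpa using hhead
  | [a], b :: c :: q, _, _, hq, _, hhead, hlast => by
    obtain rfl : a = b := by simpa using hhead
    exact absurd hlast.symm (List.getLast?_cons_cons_ne_of_nodup hq)
  | a :: c :: p, [b], hp, _, _, _, hhead, hlast => by
    obtain rfl : a = b := by simpa using hhead
    exact absurd hlast (List.getLast?_cons_cons_ne_of_nodup hp)
  | a :: c :: p, b :: d :: q, hp, hpA, hq, hqA, hhead, hlast => by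
    obtain rfl : a = b := by simpa using hhead
    rw [List.isChain_cons_cons] at hpA hqA
    obtain rfl : c = d := hA a c d hpA.1 hqA.1
    rw [List.getLast?_cons_cons, List.getLast?_cons_cons] at hlast
    rw [eq_of_isChain_of_outUnique hA (List.nodup_cons.mp hp).2 hpA.2 (List.nodup_cons.mp hq).2
      hqA.2 rfl hlast]

theorem singlyConnected_of_outUnique (hA : ∀ v x y, A v x → A v y → x = y) :
    SinglyConnected A :=
  fun _ _ _ _ hp hq hph hpl hqh hql =>
    eq_of_isChain_of_outUnique hA hp.2.1 hp.2.2 hq.2.1 hq.2.2 (hph.trans hqh.symm)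
      (hpl.trans hql.symm)

theorem isTransArc_of_triangle {v x y : V} (hvx : A v x) (hxy : A x y) (hvy : A v y)
    (hv : v ≠ x) (hx : x ≠ y) (hy : v ≠ y) : IsTransArc A v y := by
  refine ⟨hvy, [v, x, y], by simp [hv, hx, hy], ?_, rfl, rfl⟩
  exact List.isChain_cons_cons.mpr
    ⟨⟨hvx, fun h => hx h.2⟩, List.isChain_pair.mpr ⟨hxy, fun h => hv h.1.symm⟩⟩

theorem IsLocalTournament.outUnique_of_transitiveFree (hLT : IsLocalTournament A)
    (hTF : TransitiveFree A) {v x y : V} (hvx : A v x) (hvy : A v y) : x = y := by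
  obtain ⟨hloop, hout, -⟩ := hLT
  by_contra hxy
  have hvx' : v ≠ x := by rintro rfl; exact hloop v hvx
  have hvy' : v ≠ y := by rintro rfl; exact hloop v hvy
  by_cases hA : A x y
  · exact hTF v y (isTransArc_of_triangle hvx hA hvy hvx' hxy hvy')
  · have hA' : A y x := not_not.mp (mt (hout v x y hvx hvy hxy).mpr hA)
    exact hTF v x (isTransArc_of_triangle hvy hA' hvx hvy' (Ne.symm hxy) hvx')

theorem SinglyConnected.transitiveFree (hloop : ∀ v, ¬ A v v) (hSC : SinglyConnected A) :
    TransitiveFree A := by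
  rintro x y ⟨hxy, l, hl, hlA, hhead, hlast⟩
  have hne : x ≠ y := by rintro rfl; exact hloop x hxy
  have harc : IsDipath A [x, y] := ⟨by simp, by simp [hne], List.isChain_pair.mpr hxy⟩
  have hpath : IsDipath A l := ⟨by rintro rfl; simp at hhead, hl, hlA.imp fun _ _ h => h.1⟩
  obtain rfl : [x, y] = l := hSC x y _ _ harc hpath rfl rfl hhead hlast
  exact (List.isChain_pair.mp hlA).2 ⟨rfl, rfl⟩

end

/-- A local tournament is transitive-free iff it is singly connected. -/
theorem localTournament_transitiveFree_iff_singlyConnected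
    {V : Type*} (A : V → V → Prop) (hLT : IsLocalTournament A) :
    TransitiveFree A ↔ SinglyConnected A :=
  ⟨fun hTF => singlyConnected_of_outUnique fun _ _ _ => hLT.outUnique_of_transitiveFree hTF,
    SinglyConnected.transitiveFree hLT.1⟩
end

section
/- In any tournament on n ≥ 16 vertices with n ≥ 4√l for a positive integer l, there are at least l distinct transitive arcs. More precisely, if there exists a 4-uniform family F of 4-element vertex subsets with pairwise intersections of size at most 1 and |F| ≥ l, then the tournament has at least l transitive arcs, since each 4-vertex sub-tournament contains a transitive arc and distinct members of F cannot share a transitive arc. -/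
/-- If a vertex dominates two others, there is a transitive arc among the three. -/
lemma transArc_of_two {V : Type*} [DecidableEq V] {A : V → V → Prop} (hT : IsTournament A)
    (s : Finset V) {x y z : V} (hx : x ∈ s) (hy : y ∈ s) (hz : z ∈ s)
    (hxy : x ≠ y) (hxz : x ≠ z) (hyz : y ≠ z)
    (h1 : A x y) (h2 : A x z) :
    ∃ p q : V, p ≠ q ∧ p ∈ s ∧ q ∈ s ∧ IsTransArc A p q := by
  rcases Classical.em (A y z) with h3 | h3
  · refine ⟨x, z, hxz, hx, hz, h2, [x, y, z], by simp [hxy, hxz, hyz], ?_, by simp, by simp⟩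
    refine List.isChain_cons_cons.2 ⟨⟨h1, ?_⟩, List.isChain_cons_cons.2 ⟨⟨h3, ?_⟩, List.isChain_singleton _⟩⟩
    · rintro ⟨-, h⟩; exact hyz h
    · rintro ⟨h, -⟩; exact hxy h.symm
  · have h3' : A z y := (hT.2 z y hyz.symm).2 h3
    refine ⟨x, y, hxy, hx, hy, h1, [x, z, y], by simp [hxy, hxz, hyz.symm], ?_, by simp, by simp⟩
    refine List.isChain_cons_cons.2 ⟨⟨h2, ?_⟩, List.isChain_cons_cons.2 ⟨⟨h3', ?_⟩, List.isChain_singleton _⟩⟩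
    · rintro ⟨-, h⟩; exact hyz h.symm
    · rintro ⟨h, -⟩; exact hxz h.symm

/-- Any four distinct vertices of a tournament contain a transitive arc. -/
lemma transArc_of_four {V : Type*} [DecidableEq V] {A : V → V → Prop} (hT : IsTournament A)
    (s : Finset V) {a b c d : V} (ha : a ∈ s) (hb : b ∈ s) (hc : c ∈ s) (hd : d ∈ s)
    (hab : a ≠ b) (hac : a ≠ c) (had : a ≠ d) (hbc : b ≠ c) (hbd : b ≠ d) (hcd : c ≠ d) :
    ∃ p q : V, p ≠ q ∧ p ∈ s ∧ q ∈ s ∧ IsTransArc A p q := by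
  rcases Classical.em (A a b) with h1 | h1
  · rcases Classical.em (A a c) with h2 | h2
    · exact transArc_of_two hT s ha hb hc hab hac hbc h1 h2
    · rcases Classical.em (A a d) with h3 | h3
      · exact transArc_of_two hT s ha hb hd hab had hbd h1 h3
      · -- c and d both beat a
        have hc' : A c a := (hT.2 c a hac.symm).2 h2
        have hd' : A d a := (hT.2 d a had.symm).2 h3
        rcases Classical.em (A c d) with h4 | h4
        · exact transArc_of_two hT s hc hd ha hcd hac.symm had.symm h4 hc'
        · have h4' : A d c := (hT.2 d c hcd.symm).2 h4
          exact transArc_of_two hT s hd hc ha hcd.symm had.symm hac.symm h4' hd'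
  · have hb' : A b a := (hT.2 b a hab.symm).2 h1
    rcases Classical.em (A a c) with h2 | h2
    · rcases Classical.em (A a d) with h3 | h3
      · exact transArc_of_two hT s ha hc hd hac had hcd h2 h3
      · -- b and d beat a
        have hd' : A d a := (hT.2 d a had.symm).2 h3
        rcases Classical.em (A b d) with h4 | h4
        · exact transArc_of_two hT s hb hd ha hbd hab.symm had.symm h4 hb'
        · have h4' : A d b := (hT.2 d b hbd.symm).2 h4
          exact transArc_of_two hT s hd hb ha hbd.symm had.symm hab.symm h4' hd'
    · -- b and c beat a
      have hc' : A c a := (hT.2 c a hac.symm).2 h2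
      rcases Classical.em (A b c) with h4 | h4
      · exact transArc_of_two hT s hb hc ha hbc hab.symm hac.symm h4 hb'
      · have h4' : A c b := (hT.2 c b hbc.symm).2 h4
        exact transArc_of_two hT s hc hb ha hbc.symm hac.symm hab.symm h4' hc'

lemma finset_card_eq_four {V : Type*} [DecidableEq V] {s : Finset V} (h : s.card = 4) :
    ∃ a b c d : V, a ∈ s ∧ b ∈ s ∧ c ∈ s ∧ d ∈ s ∧
      a ≠ b ∧ a ≠ c ∧ a ≠ d ∧ b ≠ c ∧ b ≠ d ∧ c ≠ d := by
  rw [show (4 : ℕ) = 3 + 1 from rfl, Finset.card_eq_succ] at h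
  obtain ⟨a, t, hat, rfl, ht⟩ := h
  rw [Finset.card_eq_three] at ht
  obtain ⟨b, c, d, hbc, hbd, hcd, rfl⟩ := ht
  simp only [Finset.mem_insert, Finset.mem_singleton] at hat
  push_neg at hat
  refine ⟨a, b, c, d, ?_, ?_, ?_, ?_, hat.1, hat.2.1, hat.2.2, hbc, hbd, hcd⟩ <;> simp

/-- In any tournament on `n ≥ 16` vertices with `n ≥ 4√l` (`l` a positive integer),
if there is a 4-uniform family `F` of 4-element vertex subsets with pairwise
intersections of size at most 1 and `|F| ≥ l`, then the tournament has at least `l`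
transitive arcs. -/
theorem tournament_family_transitive_arcs
    {V : Type*} [Fintype V] [DecidableEq V] (A : V → V → Prop)
    (hT : IsTournament A) (l : ℕ) (hl : 0 < l)
    (h16 : 16 ≤ Fintype.card V)
    (hsqrt : 4 * Real.sqrt l ≤ Fintype.card V)
    (F : Finset (Finset V))
    (hunif : ∀ s ∈ F, s.card = 4)
    (hinter : ∀ s ∈ F, ∀ t ∈ F, s ≠ t → (s ∩ t).card ≤ 1)
    (hF : l ≤ F.card) :
    l ≤ {p : V × V | IsTransArc A p.1 p.2}.ncard := by
  classical
  set S : Set (V × V) := {p : V × V | IsTransArc A p.1 p.2} with hS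
  have hex : ∀ s : Finset V, ∃ p : V × V,
      s ∈ F → p.1 ≠ p.2 ∧ p.1 ∈ s ∧ p.2 ∈ s ∧ IsTransArc A p.1 p.2 := by
    intro s
    rcases Classical.em (s ∈ F) with hs | hs
    · obtain ⟨a, b, c, d, ha, hb, hc, hd, hab, hac, had, hbc, hbd, hcd⟩ :=
        finset_card_eq_four (hunif s hs)
      obtain ⟨p, q, hpq, hp, hq, harc⟩ :=
        transArc_of_four hT s ha hb hc hd hab hac had hbc hbd hcd
      exact ⟨(p, q), fun _ => ⟨hpq, hp, hq, harc⟩⟩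
    · have hne : Nonempty V := Fintype.card_pos_iff.mp (by omega)
      exact ⟨(Classical.choice hne, Classical.choice hne), fun h => absurd h hs⟩
  choose g hg using hex
  have hinj : Set.InjOn g ↑F := by
    intro s hs t ht hst
    by_contra hne
    have hgs := hg s hs
    have hgt := hg t ht
    have h1 : (g s).1 ∈ s ∩ t := Finset.mem_inter.2 ⟨hgs.2.1, hst ▸ hgt.2.1⟩
    have h2 : (g s).2 ∈ s ∩ t := Finset.mem_inter.2 ⟨hgs.2.2.1, hst ▸ hgt.2.2.1⟩
    have : 2 ≤ (s ∩ t).card := by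
      have hsub : ({(g s).1, (g s).2} : Finset V) ⊆ s ∩ t := by
        intro x hx
        simp only [Finset.mem_insert, Finset.mem_singleton] at hx
        rcases hx with rfl | rfl
        · exact h1
        · exact h2
      calc 2 = ({(g s).1, (g s).2} : Finset V).card := (Finset.card_pair hgs.1).symm
        _ ≤ (s ∩ t).card := Finset.card_le_card hsub
    exact absurd (hinter s hs t ht hne) (by omega)
  have hsub : ↑(F.image g) ⊆ S := by
    intro p hp
    rw [Finset.coe_image] at hp
    obtain ⟨s, hs, rfl⟩ := hp
    exact (hg s hs).2.2.2
  calc l ≤ F.card := hF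
    _ = (F.image g).card := (Finset.card_image_of_injOn hinj).symm
    _ = (↑(F.image g) : Set (V × V)).ncard := (Set.ncard_coe_finset _).symm
    _ ≤ S.ncard := Set.ncard_le_ncard hsub (Set.toFinite S)
end

section
/- Let G be an undirected graph and H the digraph obtained by: taking V(G) as vertices, and for each edge v_i v_j of G with i < j, adding a new vertex x_{ij} together with arcs (v_i, x_{ij}), (x_{ij}, v_j) and (v_i, v_j). Then G has a vertex cover of size at most k if and only if H has a set X of at most k vertices such that H - X has no transitive arcs. -/
/-- The arc relation of the digraph obtained by deleting the vertex set `X`. -/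
def Del {V : Type*} (A : V → V → Prop) (X : Set V) (a b : V) : Prop :=
  a ∉ X ∧ b ∉ X ∧ A a b

/-- The vertex set of the digraph `H` built from `G`: the original vertices together
with one subdivision vertex `x_{ij}` for every edge `v_i v_j` (`i < j`) of `G`. -/
def HVert (n : ℕ) (G : SimpleGraph (Fin n)) : Type :=
  Fin n ⊕ {p : Fin n × Fin n // p.1 < p.2 ∧ G.Adj p.1 p.2}

/-- The arcs of `H`: for each edge `v_i v_j` of `G` with `i < j`, the arcs
`(v_i, x_{ij})`, `(x_{ij}, v_j)` and `(v_i, v_j)`. -/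
def HArc (n : ℕ) (G : SimpleGraph (Fin n)) : HVert n G → HVert n G → Prop
  | Sum.inl i, Sum.inl j => i < j ∧ G.Adj i j
  | Sum.inl i, Sum.inr e => e.1.1 = i
  | Sum.inr e, Sum.inl j => e.1.2 = j
  | Sum.inr _, Sum.inr _ => False

namespace List

variable {α : Type*} {R : α → α → Prop} {l : List α} {x y : α}

theorem IsChain.exists_rel_left_of_head?_of_getLast? (hl : l.IsChain R)
    (hx : l.head? = some x) (hy : l.getLast? = some y) (hxy : x ≠ y) : ∃ c, R x c := by
  match l, hl with
  | [], _ => simp at hx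
  | [a], _ => simp_all
  | a :: b :: _, hl =>
    obtain rfl : a = x := by simpa using hx
    exact ⟨b, (isChain_cons_cons.mp hl).1⟩

theorem IsChain.exists_rel_right_of_head?_of_getLast? (hl : l.IsChain R)
    (hx : l.head? = some x) (hy : l.getLast? = some y) (hxy : x ≠ y) : ∃ c, R c y :=
  (isChain_reverse.mpr hl).exists_rel_left_of_head?_of_getLast?
    (by rwa [head?_reverse]) (by rwa [getLast?_reverse]) hxy.symm

end List

section TransArc

variable {V : Type*} {A : V → V → Prop} {x y : V}

theorem not_isTransArc_of_forall_succ_eq (hxy : x ≠ y) (hsucc : ∀ c, A x c → c = y) :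
    ¬ IsTransArc A x y := by
  rintro ⟨-, l, -, hl, hx, hy⟩
  obtain ⟨c, hc, hne⟩ := List.IsChain.exists_rel_left_of_head?_of_getLast? hl hx hy hxy
  exact hne ⟨rfl, hsucc c hc⟩

theorem not_isTransArc_of_forall_pred_eq (hxy : x ≠ y) (hpred : ∀ c, A c y → c = x) :
    ¬ IsTransArc A x y := by
  rintro ⟨-, l, -, hl, hx, hy⟩
  obtain ⟨c, hc, hne⟩ := List.IsChain.exists_rel_right_of_head?_of_getLast? hl hx hy hxy
  exact hne ⟨hpred c hc, rfl⟩

theorem Del.rel {X : Set V} {a b : V} (h : Del A X a b) : A a b :=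
  h.2.2

end TransArc

namespace HVert

variable {n : ℕ} {G : SimpleGraph (Fin n)}

instance (n : ℕ) (G : SimpleGraph (Fin n)) : Finite (HVert n G) := by
  unfold HVert; infer_instance

def toVertex : HVert n G → Fin n
  | Sum.inl i => i
  | Sum.inr e => e.1.1

end HVert

namespace HArc

variable {n : ℕ} {G : SimpleGraph (Fin n)}

theorem ne {a b : HVert n G} (h : HArc n G a b) : a ≠ b := by
  rintro rfl
  rcases a with i | e
  · exact lt_irrefl i h.1
  · exact h

theorem eq_of_source_inr {e} {b : HVert n G} (h : HArc n G (Sum.inr e) b) :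
    b = Sum.inl e.1.2 := by
  rcases b with j | f
  · exact congrArg Sum.inl h.symm
  · exact h.elim

theorem eq_of_target_inr {e} {a : HVert n G} (h : HArc n G a (Sum.inr e)) :
    a = Sum.inl e.1.1 := by
  rcases a with i | f
  · exact congrArg Sum.inl h.symm
  · exact h.elim

end HArc

section Reduction

variable {n : ℕ} {G : SimpleGraph (Fin n)}

theorem not_isTransArc_del_image_of_isVertexCover {S : Set (Fin n)} (hS : G.IsVertexCover S)
    (a b : HVert n G) : ¬ IsTransArc (Del (HArc n G) (Sum.inl '' S)) a b := by
  intro hab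
  obtain ⟨ha, hb, harc⟩ := hab.1
  match a, b, harc with
  | Sum.inl i, Sum.inl j, harc =>
    rcases hS harc.2 with h | h
    · exact ha ⟨i, h, rfl⟩
    · exact hb ⟨j, h, rfl⟩
  | Sum.inl i, Sum.inr e, harc =>
    refine not_isTransArc_of_forall_pred_eq harc.ne (fun c hc => ?_) hab
    rw [hc.rel.eq_of_target_inr, harc]
  | Sum.inr e, Sum.inl j, harc =>
    refine not_isTransArc_of_forall_succ_eq harc.ne (fun c hc => ?_) hab
    rw [hc.rel.eq_of_source_inr, harc]

theorem isTransArc_del_of_adj {X : Set (HVert n G)} {u v : Fin n} (huv : u < v) (hadj : G.Adj u v)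
    (hu : Sum.inl u ∉ X) (hv : Sum.inl v ∉ X) (he : Sum.inr ⟨(u, v), huv, hadj⟩ ∉ X) :
    IsTransArc (Del (HArc n G) X) (Sum.inl u) (Sum.inl v) := by
  refine ⟨⟨hu, hv, huv, hadj⟩, [Sum.inl u, Sum.inr ⟨(u, v), huv, hadj⟩, Sum.inl v], ?_, ?_, rfl, rfl⟩
  · simp [HVert, huv.ne]
  · exact List.isChain_cons_cons.mpr ⟨⟨⟨hu, he, rfl⟩, fun h => Sum.inr_ne_inl h.2⟩,
      List.isChain_pair.mpr ⟨⟨he, hv, rfl⟩, fun h => Sum.inr_ne_inl h.1⟩⟩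

theorem isVertexCover_image_toVertex {X : Set (HVert n G)}
    (hX : ∀ a b : HVert n G, ¬ IsTransArc (Del (HArc n G) X) a b) :
    G.IsVertexCover (HVert.toVertex '' X) := by
  suffices h : ∀ u v, u < v → G.Adj u v → u ∈ HVert.toVertex '' X ∨ v ∈ HVert.toVertex '' X by
    intro u v hadj
    rcases hadj.ne.lt_or_gt with huv | hvu
    · exact h u v huv hadj
    · exact (h v u hvu hadj.symm).symm
  intro u v huv hadj
  by_cases hu : Sum.inl u ∈ X
  · exact Or.inl ⟨_, hu, rfl⟩
  by_cases hv : Sum.inl v ∈ X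
  · exact Or.inr ⟨_, hv, rfl⟩
  by_cases he : Sum.inr ⟨(u, v), huv, hadj⟩ ∈ X
  · exact Or.inl ⟨_, he, rfl⟩
  exact (hX _ _ (isTransArc_del_of_adj huv hadj hu hv he)).elim

end Reduction

/-- `G` has a vertex cover of size at most `k` iff `H` has a set `X` of at most `k`
vertices such that `H - X` has no transitive arcs. -/
theorem vertexCover_iff_transitiveFree_deletion
    (n : ℕ) (G : SimpleGraph (Fin n)) (k : ℕ) :
    (∃ S : Set (Fin n), S.ncard ≤ k ∧ ∀ u v : Fin n, G.Adj u v → u ∈ S ∨ v ∈ S) ↔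
    (∃ X : Set (HVert n G), X.ncard ≤ k ∧
      ∀ a b : HVert n G, ¬ IsTransArc (Del (HArc n G) X) a b) := by
  constructor
  · rintro ⟨S, hS, hcover⟩
    exact ⟨Sum.inl '' S, (Set.ncard_image_of_injective S Sum.inl_injective).trans_le hS,
      not_isTransArc_del_image_of_isVertexCover (fun u v h => hcover u v h)⟩
  · rintro ⟨X, hX, hfree⟩
    exact ⟨HVert.toVertex '' X, (Set.ncard_image_le X.toFinite).trans hX,
      fun u v h => isVertexCover_image_toVertex hfree h⟩
end

section
/- Let D be a connected acyclic local tournament with unique topological ordering (v_1, ..., v_n). Then there exists a minimum-size set S of vertices such that D - S is transitive-free and S contains neither v_1 nor v_n. -/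
theorem CovBy.swap_apply_lt_swap_apply {α : Type*} [LinearOrder α] {i j a b : α}
    (hij : i ⋖ j) (hab : a < b) (hne : ¬(a = i ∧ b = j)) :
    Equiv.swap i j a < Equiv.swap i j b := by
  have hlt := hij.lt
  have h₁ : a ≠ j → a < j → a ≤ i := fun _ => hij.le_of_lt
  have h₂ : b ≠ i → i < b → j ≤ b := fun _ => hij.ge_of_gt
  rw [Equiv.swap_apply_def, Equiv.swap_apply_def]
  split_ifs <;> grind

theorem arc_of_covBy_of_unique_topological_order {ι V : Type*} [LinearOrder ι]
    {A : V → V → Prop} (σ : ι ≃ V) (htopo : ∀ i j, A (σ i) (σ j) → i < j)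
    (huniq : ∀ τ : ι ≃ V, (∀ i j, A (τ i) (τ j) → i < j) → τ = σ) {i j : ι} (hij : i ⋖ j) :
    A (σ i) (σ j) := by
  by_contra hA
  have hswap : (Equiv.swap i j).trans σ = σ := huniq _ fun p q hpq => by
    simpa using hij.swap_apply_lt_swap_apply (htopo _ _ hpq)
      fun ⟨hp, hq⟩ => hA (by simpa [hp, hq] using hpq)
  exact hij.lt.ne' (σ.injective (by simpa using congrArg (· i) hswap))

section LinearOrder

variable {α : Type*} [LinearOrder α] {A : α → α → Prop}

theorem IsLocalTournament.arc_left_of_lt_of_lt [WellFoundedLT α] [IsStronglyCoatomic α]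
    (hLT : IsLocalTournament A) (hA : ∀ x y, A x y → x < y) (hcov : ∀ x y, x ⋖ y → A x y)
    {x y z : α} (hxz : A x z) (hxy : x < y) (hyz : y < z) : A x y := by
  induction z using WellFoundedLT.induction generalizing y with
  | _ z ih =>
    obtain ⟨w, hyw, hwz⟩ := exists_le_covBy_of_lt hyz
    have hxw : A x w := (hLT.2.2 z x w hxz (hcov w z hwz) (hxy.trans_le hyw).ne).2
      fun hwx => (hA w x hwx).not_gt (hxy.trans_le hyw)
    rcases hyw.eq_or_lt with rfl | hyw
    · exact hxw
    · exact ih w hwz.lt hxw hxy hyw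

theorem IsLocalTournament.arc_right_of_lt_of_lt [WellFoundedLT α] [IsStronglyCoatomic α]
    (hLT : IsLocalTournament A) (hA : ∀ x y, A x y → x < y) (hcov : ∀ x y, x ⋖ y → A x y)
    {x y z : α} (hxz : A x z) (hxy : x < y) (hyz : y < z) : A y z :=
  (hLT.2.1 x y z (hLT.arc_left_of_lt_of_lt hA hcov hxz hxy hyz) hxz hyz.ne).2
    fun hzy => (hA z y hzy).not_gt hyz

def HitsTriangles (A : α → α → Prop) (S : Set α) : Prop :=
  ∀ x y z, x < y → y < z → A x z → x ∈ S ∨ y ∈ S ∨ z ∈ S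

theorem transitiveFree_del_iff_hitsTriangles (hA : ∀ x y, A x y → x < y)
    (hconv : ∀ x y z, A x z → x < y → y < z → A x y ∧ A y z) {S : Set α} :
    TransitiveFree (Del A S) ↔ HitsTriangles A S := by
  constructor
  · intro hfree x y z hxy hyz hxz
    by_contra! hout
    obtain ⟨hx, hy, hz⟩ := hout
    obtain ⟨hxy', hyz'⟩ := hconv x y z hxz hxy hyz
    refine hfree x z ⟨⟨hx, hz, hxz⟩, [x, y, z], ?_, ?_, rfl, rfl⟩
    · simp [hxy.ne, hyz.ne, (hxy.trans hyz).ne]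
    · show List.IsChain _ [x, y, z]
      simp [Del, *, hyz.ne, hxy.ne']
  · rintro hS x y ⟨⟨hx, hy, hxy⟩, _ | ⟨x', _ | ⟨b, t⟩⟩, -, hpath, hhead, hlast⟩
    · simp at hhead
    · simp only [List.head?_cons, Option.some.injEq, List.getLast?_singleton] at hhead hlast
      exact (hA x y hxy).ne (hhead.symm.trans hlast)
    simp only [List.head?_cons, Option.some.injEq] at hhead
    subst x'
    obtain ⟨⟨⟨-, hb, hxb⟩, hby⟩, hpath⟩ := List.isChain_cons_cons.mp hpath
    have hsorted : (b :: t).Pairwise (· < ·) :=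
      List.isChain_iff_pairwise.mp (hpath.imp fun u v huv => hA u v huv.1.2.2)
    have hymem : y ∈ b :: t := List.mem_of_getLast? (by simpa using hlast)
    have hby : b < y := by
      rcases List.mem_cons.mp hymem with rfl | hyt
      · exact absurd ⟨rfl, rfl⟩ hby
      · exact List.rel_of_pairwise_cons hsorted hyt
    rcases hS x b y (hA x b hxb) hby hxy with h | h | h <;> contradiction

theorem HitsTriangles.insert_sdiff_of_isBot (hconv : ∀ x y z, A x z → x < y → y < z → A y z)
    {S : Set α} (hS : HitsTriangles A S) {a c : α} (ha : IsBot a) (hc : c ∉ S)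
    (hc_min : ∀ y z, y ∉ S → y < z → c ≤ y) : HitsTriangles A (insert c (S \ {a})) := by
  intro x y z hxy hyz hxz
  by_contra! hout
  simp only [Set.mem_insert_iff, Set.mem_sdiff, Set.mem_singleton_iff, not_or, not_and,
    not_not] at hout
  obtain ⟨⟨-, hxa⟩, ⟨hyc, hya⟩, -, hza⟩ := hout
  have hyS : y ∉ S := fun h => ((ha x).trans_lt hxy).ne' (hya h)
  have hzS : z ∉ S := fun h => ((ha x).trans_lt (hxy.trans hyz)).ne' (hza h)
  have hxS : x ∈ S := by
    rcases hS x y z hxy hyz hxz with h | h | h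
    exacts [h, absurd h hyS, absurd h hzS]
  have hxc : x < c := (hxa hxS ▸ ha c).lt_of_ne fun h => hc (h ▸ hxS)
  have hcy : c < y := (hc_min y z hyS hyz).lt_of_ne (Ne.symm hyc)
  rcases hS c y z hcy hyz (hconv x c z hxz hxc (hcy.trans hyz)) with h | h | h
  exacts [hc h, hyS h, hzS h]

theorem HitsTriangles.exists_ncard_le_notMem_of_isBot [Finite α]
    (hconv : ∀ x y z, A x z → x < y → y < z → A y z) {S : Set α} (hS : HitsTriangles A S)
    {a : α} (ha : IsBot a) (hS_ne : ∃ y ∉ S, ¬IsMax y) :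
    ∃ S', HitsTriangles A S' ∧ S'.ncard ≤ S.ncard ∧ a ∉ S' ∧ ∀ x ∈ S', IsMax x → x ∈ S := by
  by_cases haS : a ∈ S
  swap
  · exact ⟨S, hS, le_rfl, haS, fun x hx _ => hx⟩
  obtain ⟨c, ⟨hcS, hc_max⟩, hc_min⟩ :=
    Set.exists_min_image {y | y ∉ S ∧ ¬IsMax y} id (Set.toFinite _) hS_ne
  refine ⟨insert c (S \ {a}), hS.insert_sdiff_of_isBot hconv ha hcS
    (fun y z hy hyz => hc_min y ⟨hy, not_isMax_of_lt hyz⟩), ?_, ?_, ?_⟩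
  · calc (insert c (S \ {a})).ncard ≤ (S \ {a}).ncard + 1 := Set.ncard_insert_le _ _
      _ = S.ncard := Set.ncard_sdiff_singleton_add_one haS
  · rintro (h | ⟨-, h⟩)
    exacts [hcS (h ▸ haS), h rfl]
  · rintro x (rfl | ⟨hx, -⟩) hmax
    exacts [absurd hmax hc_max, hx]

theorem HitsTriangles.dual {S : Set α} (hS : HitsTriangles A S) :
    HitsTriangles (α := αᵒᵈ) (fun x y => A (OrderDual.ofDual y) (OrderDual.ofDual x)) S :=
  fun x y z hxy hyz hxz => by have := hS z y x hyz hxy hxz; tauto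

theorem HitsTriangles.exists_ncard_le_notMem_of_isTop [Finite α]
    (hconv : ∀ x y z, A x z → x < y → y < z → A x y) {S : Set α} (hS : HitsTriangles A S)
    {b : α} (hb : IsTop b) (hS_ne : ∃ y ∉ S, ¬IsMin y) :
    ∃ S', HitsTriangles A S' ∧ S'.ncard ≤ S.ncard ∧ b ∉ S' ∧ ∀ x ∈ S', IsMin x → x ∈ S := by
  obtain ⟨S', hS', hcard, hbS', hmin⟩ :=
    HitsTriangles.exists_ncard_le_notMem_of_isBot (α := αᵒᵈ)
      (A := fun x y => A (OrderDual.ofDual y) (OrderDual.ofDual x))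
      (fun x y z hxz hxy hyz => hconv _ _ _ hxz hyz hxy) hS.dual (a := OrderDual.toDual b) hb hS_ne
  exact ⟨S', hS'.dual, hcard, hbS', hmin⟩

theorem exists_minimum_hitsTriangles_notMem_of_isBot_of_isTop [Finite α]
    (hconv : ∀ x y z, A x z → x < y → y < z → A x y ∧ A y z) {a b : α}
    (ha : IsBot a) (hb : IsTop b) :
    ∃ S, HitsTriangles A S ∧ (∀ S', HitsTriangles A S' → S.ncard ≤ S'.ncard) ∧
      a ∉ S ∧ b ∉ S := by
  obtain ⟨S₀, hS₀, hmin⟩ := Set.exists_min_image {S | HitsTriangles A S} Set.ncard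
    (Set.toFinite _) ⟨Set.univ, fun _ _ _ _ _ _ => Or.inl trivial⟩
  set M : Set α := {a, b}ᶜ
  have hM : HitsTriangles A M := fun x y z hxy hyz _ => by
    simp only [M, Set.mem_compl_iff, Set.mem_insert_iff, Set.mem_singleton_iff, not_or]
    exact Or.inr (Or.inl ⟨((ha x).trans_lt hxy).ne', (hyz.trans_le (hb z)).ne⟩)
  by_cases hM_le : M.ncard ≤ S₀.ncard
  · exact ⟨M, hM, fun S' hS' => hM_le.trans (hmin S' hS'), by simp [M], by simp [M]⟩
  have interior : ∀ S : Set α, S.ncard ≤ S₀.ncard → ∃ y ∉ S, ¬IsMin y ∧ ¬IsMax y := by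
    intro S hS
    obtain ⟨y, hyM, hyS⟩ :=
      Set.exists_mem_notMem_of_ncard_lt_ncard (hS.trans_lt (not_le.mp hM_le))
    simp only [M, Set.mem_compl_iff, Set.mem_insert_iff, Set.mem_singleton_iff, not_or] at hyM
    exact ⟨y, hyS, fun h => hyM.1 (h.eq_of_le (ha y)).symm,
      fun h => hyM.2 (h.eq_of_ge (hb y)).symm⟩
  obtain ⟨S₁, hS₁, hS₁_card, haS₁, -⟩ := hS₀.exists_ncard_le_notMem_of_isBot
    (fun x y z h hxy hyz => (hconv x y z h hxy hyz).2) ha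
    (by obtain ⟨y, hy, -, hy'⟩ := interior S₀ le_rfl; exact ⟨y, hy, hy'⟩)
  obtain ⟨S₂, hS₂, hS₂_card, hbS₂, hS₂_min⟩ := hS₁.exists_ncard_le_notMem_of_isTop
    (fun x y z h hxy hyz => (hconv x y z h hxy hyz).1) hb
    (by obtain ⟨y, hy, hy', -⟩ := interior S₁ hS₁_card; exact ⟨y, hy, hy'⟩)
  exact ⟨S₂, hS₂, fun S' hS' => hS₂_card.trans (hS₁_card.trans (hmin S' hS')),
    fun h => haS₁ (hS₂_min a h ha.isMin), hbS₂⟩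

end LinearOrder

theorem min_solution_avoiding_endpoints_general
    {V : Type*} [Fintype V] (A : V → V → Prop)
    (hLT : IsLocalTournament A)
    (σ : Fin (Fintype.card V) ≃ V)
    (htopo : ∀ i j : Fin (Fintype.card V), A (σ i) (σ j) → i < j)
    (huniq : ∀ τ : Fin (Fintype.card V) ≃ V,
      (∀ i j : Fin (Fintype.card V), A (τ i) (τ j) → i < j) → τ = σ)
    (hpos : 0 < Fintype.card V) :
    ∃ S : Set V, TransitiveFree (Del A S) ∧
      (∀ S' : Set V, TransitiveFree (Del A S') → S.ncard ≤ S'.ncard) ∧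
      σ ⟨0, hpos⟩ ∉ S ∧ σ ⟨Fintype.card V - 1, Nat.sub_lt hpos one_pos⟩ ∉ S := by
  let : LinearOrder V := LinearOrder.lift' σ.symm σ.symm.injective
  have hA : ∀ x y, A x y → x < y := fun x y h =>
    htopo _ _ (by rwa [σ.apply_symm_apply, σ.apply_symm_apply])
  have hcov : ∀ x y, x ⋖ y → A x y := fun x y h => by
    simpa using arc_of_covBy_of_unique_topological_order σ htopo huniq
      (i := σ.symm x) (j := σ.symm y) ⟨h.1, fun c hxc hcy => h.2 (c := σ c)
        (show σ.symm x < σ.symm (σ c) by rwa [σ.symm_apply_apply])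
        (show σ.symm (σ c) < σ.symm y by rwa [σ.symm_apply_apply])⟩
  have hconv : ∀ x y z, A x z → x < y → y < z → A x y ∧ A y z := fun x y z hxz hxy hyz =>
    ⟨hLT.arc_left_of_lt_of_lt hA hcov hxz hxy hyz, hLT.arc_right_of_lt_of_lt hA hcov hxz hxy hyz⟩
  have hbot : IsBot (σ ⟨0, hpos⟩) := fun x =>
    show σ.symm (σ _) ≤ σ.symm x by simp [Fin.le_def]
  have htop : IsTop (σ ⟨Fintype.card V - 1, Nat.sub_lt hpos one_pos⟩) := fun x =>
    show σ.symm x ≤ σ.symm (σ _) by simp [Fin.le_def]; omega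
  obtain ⟨S, hS, hmin, h₀, h₁⟩ :=
    exists_minimum_hitsTriangles_notMem_of_isBot_of_isTop hconv hbot htop
  simp only [← transitiveFree_del_iff_hitsTriangles hA hconv] at hS hmin
  exact ⟨S, hS, hmin, h₀, h₁⟩

/-- Let `D` be a connected acyclic local tournament with unique topological ordering
`(v_1, ..., v_n)`. Then there is a minimum-size set `S` of vertices with `D - S`
transitive-free containing neither `v_1` nor `v_n`. -/
theorem min_solution_avoiding_endpoints
    {V : Type*} [Fintype V] (A : V → V → Prop)
    (hLT : IsLocalTournament A) (hconn : UConnected A)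
    (hac : Irreflexive (Relation.TransGen A))
    (σ : Fin (Fintype.card V) ≃ V)
    (htopo : ∀ i j : Fin (Fintype.card V), A (σ i) (σ j) → i < j)
    (huniq : ∀ τ : Fin (Fintype.card V) ≃ V,
      (∀ i j : Fin (Fintype.card V), A (τ i) (τ j) → i < j) → τ = σ)
    (hpos : 0 < Fintype.card V) :
    ∃ S : Set V, TransitiveFree (Del A S) ∧
      (∀ S' : Set V, TransitiveFree (Del A S') → S.ncard ≤ S'.ncard) ∧
      σ ⟨0, hpos⟩ ∉ S ∧ σ ⟨Fintype.card V - 1, Nat.sub_lt hpos one_pos⟩ ∉ S :=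
  min_solution_avoiding_endpoints_general A hLT σ htopo huniq hpos
end
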